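/- arXiv:2411.01468 — 4 statements merged into one kernel-verified Lean document; each statement's English description precedes it below -/
import Mathlib

section
/- For the matrix T⁰ (defined by (T⁰)_{j,ℓ} = j/k if j=ℓ, 1-j/k if j=ℓ+1, 0 otherwise), the vector u^{(j)} with entries u^{(j)}(r) = C(j,r)/C(k,r) for 0 ≤ r ≤ j and u^{(j)}(r) = 0 for j < r ≤ k satisfies T⁰ u^{(j)} = (j/k) u^{(j)}. -/
/-!
Since `C(j, r) = 0` for `r > j`, the vector is simply `r ↦ C(j, r) / C(k, r)` on `0..k`.
Row `r` of `T⁰` gives `(r/k) u(r) + (1 - r/k) u(r+1)`, and the absorption identity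
`C(n, r+1) (r+1) = C(n, r) (n - r)`, applied with `n = j` and `n = k`, yields
`(k - r) u(r+1) = (j - r) u(r)`; the two terms then add up to `(j/k) u(r)`.
-/

/-- The non-perturbed matrix `T⁰`: bidiagonal with `(T⁰)_{j,j} = j/k`,
`(T⁰)_{j,ℓ} = 1 - j/k` on the other nonzero diagonal (`ℓ` adjacent to `j`), else `0`. -/
noncomputable def T0 (k : ℕ) : Matrix (Fin (k + 1)) (Fin (k + 1)) ℝ :=
  fun j l => if j = l then (j : ℝ) / k else if (l : ℕ) = (j : ℕ) + 1 then 1 - (j : ℝ) / k else 0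

open Matrix Finset

theorem Nat.cast_choose_succ_right_mul (n r : ℕ) :
    (n.choose (r + 1) : ℝ) * (r + 1) = n.choose r * ((n : ℝ) - r) := by
  rcases le_or_gt r n with hrn | hnr
  · rw [← Nat.cast_sub hrn]
    exact_mod_cast Nat.choose_succ_right_eq n r
  · simp [Nat.choose_eq_zero_of_lt hnr, Nat.choose_eq_zero_of_lt (hnr.trans r.lt_succ_self)]

/-- The hypothesis `f (k + 1) = 0` lets the last row, which has no superdiagonal entry,
follow the same formula as the others. -/
theorem T0_mulVec_apply (k : ℕ) (f : ℕ → ℝ) (hf : f (k + 1) = 0) (r : Fin (k + 1)) :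
    (T0 k *ᵥ fun l => f l) r = r / k * f r + (1 - r / k) * f (r + 1) := by
  let g : ℕ → ℝ := fun i =>
    (if i = r then r / k * f i else 0) + if i = r + 1 then (1 - r / k) * f i else 0
  have hentry (l : Fin (k + 1)) : T0 k r l * f l = g l := by
    simp only [T0, Fin.ext_iff, g]
    split_ifs <;> grind
  have hg : g (k + 1) = 0 := by simp [g, hf]
  rw [mulVec, dotProduct, Fintype.sum_congr _ _ hentry, Fin.sum_univ_eq_sum_range g,
    ← add_zero (∑ i ∈ range _, g i), ← hg, ← sum_range_succ, sum_add_distrib, sum_ite_eq',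
    sum_ite_eq']
  simp [r.is_le]

noncomputable def chooseRatio (j k r : ℕ) : ℝ := (j.choose r : ℝ) / k.choose r

theorem chooseRatio_of_lt {j r : ℕ} (k : ℕ) (h : j < r) : chooseRatio j k r = 0 := by
  simp [chooseRatio, Nat.choose_eq_zero_of_lt h]

theorem sub_mul_chooseRatio_succ {j k r : ℕ} (hr : r < k) :
    ((k : ℝ) - r) * chooseRatio j k (r + 1) = ((j : ℝ) - r) * chooseRatio j k r := by
  have hj := Nat.cast_choose_succ_right_mul j r
  have hk := Nat.cast_choose_succ_right_mul k r
  have hkr : (k.choose r : ℝ) ≠ 0 := by exact_mod_cast (Nat.choose_pos hr.le).ne'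
  have hkr' : (k.choose (r + 1) : ℝ) ≠ 0 := by exact_mod_cast (Nat.choose_pos hr).ne'
  unfold chooseRatio
  field_simp
  linear_combination (k.choose (r + 1) : ℝ) * hj - (j.choose (r + 1) : ℝ) * hk

theorem chooseRatio_recurrence {j k r : ℕ} (hj : j ≤ k) (hr : r ≤ k) :
    r / k * chooseRatio j k r + (1 - r / k) * chooseRatio j k (r + 1) =
      j / k * chooseRatio j k r := by
  rcases hr.lt_or_eq with hr | rfl
  · have hk : (k : ℝ) ≠ 0 := by exact_mod_cast (Nat.zero_lt_of_lt hr).ne'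
    have := sub_mul_chooseRatio_succ (j := j) hr
    field_simp
    linear_combination this
  · rw [chooseRatio_of_lt _ (Nat.lt_succ_of_le hj), mul_zero, add_zero]
    rcases hj.lt_or_eq with hj | rfl
    · simp [chooseRatio_of_lt _ hj]
    · rfl

theorem T0_right_eigenvector_general (k j : ℕ) (hj : j ≤ k) :
    (T0 k).mulVec
        (fun r : Fin (k + 1) =>
          if (r : ℕ) ≤ j then (Nat.choose j r : ℝ) / (Nat.choose k r : ℝ) else 0) =
      ((j : ℝ) / k) •
        (fun r : Fin (k + 1) =>
          if (r : ℕ) ≤ j then (Nat.choose j r : ℝ) / (Nat.choose k r : ℝ) else 0) := by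
  have hu : (fun r : Fin (k + 1) =>
      if (r : ℕ) ≤ j then (Nat.choose j r : ℝ) / (Nat.choose k r : ℝ) else 0) =
        fun r : Fin (k + 1) => chooseRatio j k r := by
    funext r
    split_ifs with hr
    · rfl
    · exact (chooseRatio_of_lt k (not_le.mp hr)).symm
  rw [hu]
  funext r
  rw [T0_mulVec_apply k _ (chooseRatio_of_lt k (by omega)) r, Pi.smul_apply, smul_eq_mul]
  exact chooseRatio_recurrence hj r.is_le

/-- The vector `u^{(j)}` with `u^{(j)}(r) = C(j,r)/C(k,r)` for `r ≤ j` and `0` for `r > j`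
is a right eigenvector of `T⁰` with eigenvalue `j/k`. -/
theorem T0_right_eigenvector (k j : ℕ) (hk : 1 ≤ k) (hj : j ≤ k) :
    (T0 k).mulVec
        (fun r : Fin (k + 1) =>
          if (r : ℕ) ≤ j then (Nat.choose j r : ℝ) / (Nat.choose k r : ℝ) else 0) =
      ((j : ℝ) / k) •
        (fun r : Fin (k + 1) =>
          if (r : ℕ) ≤ j then (Nat.choose j r : ℝ) / (Nat.choose k r : ℝ) else 0) :=
  T0_right_eigenvector_general k j hj
end

section
/- For the matrix T⁰ as above, the row vector v^{(j)} with entries v^{(j)}(r) = (-1)^{r-j} C(k-j, r-j) for j ≤ r ≤ k and 0 for r < j satisfies v^{(j)} T⁰ = (j/k) v^{(j)}. -/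
/-!
Column `ℓ + 1` of `T⁰` has only two nonzero entries, so `(v T⁰)(ℓ + 1) = v(ℓ) (1 - ℓ/k) +
v(ℓ + 1) (ℓ + 1)/k`, while column `0` contributes `0 · v(0)`. After clearing `k`, the eigenvalue
equation for `v^{(j)}` becomes the two-term recurrence `v(ℓ) (k - ℓ) + v(ℓ + 1) (ℓ + 1 - j) = 0`,
which for `ℓ ≥ j` is the binomial identity `C(n, m) (n - m) = C(n, m + 1) (m + 1)` with
`n = k - j`, `m = ℓ - j`, up to the alternating sign.
-/

open Matrix

theorem Nat.cast_choose_mul_sub {R : Type*} [CommRing R] (n m : ℕ) :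
    (n.choose m : R) * (n - m) = n.choose (m + 1) * (m + 1) := by
  rcases le_or_gt m n with hmn | hnm
  · have h := congrArg (Nat.cast : ℕ → R) (Nat.choose_succ_right_eq n m)
    push_cast [Nat.cast_sub hmn] at h
    exact h.symm
  · simp [Nat.choose_eq_zero_of_lt hnm, Nat.choose_eq_zero_of_lt (hnm.trans (Nat.lt_succ_self m))]

noncomputable def signedChoose (n j r : ℕ) : ℝ :=
  if j ≤ r then (-1 : ℝ) ^ (r - j) * (n.choose (r - j) : ℝ) else 0

theorem signedChoose_recurrence (n j i : ℕ) :
    signedChoose n j i * ((j + n : ℕ) - i : ℝ) + signedChoose n j (i + 1) * ((i : ℝ) + 1 - j) = 0 := by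
  unfold signedChoose
  rcases lt_or_ge i j with hij | hji
  · rcases (Nat.succ_le_of_lt hij).lt_or_eq with hlt | rfl
    · simp [Nat.not_le.mpr hij, Nat.not_le.mpr hlt]
    · simp
  · obtain ⟨m, rfl⟩ := Nat.exists_eq_add_of_le hji
    simp only [hji, show j ≤ j + m + 1 by omega, if_true, Nat.add_sub_cancel_left,
      show j + m + 1 - j = m + 1 by omega, pow_succ]
    have := Nat.cast_choose_mul_sub (R := ℝ) n m
    push_cast at this ⊢
    linear_combination (-1 : ℝ) ^ m * this

theorem vecMul_T0_zero {k : ℕ} (v : Fin (k + 1) → ℝ) : vecMul v (T0 k) 0 = 0 := by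
  rw [vecMul, dotProduct]
  refine Finset.sum_eq_zero fun r _ => ?_
  by_cases hr : r = 0 <;> simp [T0, hr]

theorem T0_apply_succ {k : ℕ} (r : Fin (k + 1)) (i : Fin k) :
    T0 k r i.succ = (if r = i.castSucc then 1 - (i : ℕ) / (k : ℝ) else 0) +
      (if r = i.succ then ((i : ℕ) + 1) / (k : ℝ) else 0) := by
  simp only [T0, Fin.ext_iff, Fin.val_succ, Fin.val_castSucc]
  split_ifs <;> first | omega | simp_all

theorem vecMul_T0_succ {k : ℕ} (v : Fin (k + 1) → ℝ) (i : Fin k) :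
    vecMul v (T0 k) i.succ =
      v i.castSucc * (1 - (i : ℕ) / (k : ℝ)) + v i.succ * (((i : ℕ) + 1) / (k : ℝ)) := by
  simp only [vecMul, dotProduct, T0_apply_succ, mul_add, mul_ite, mul_zero, Finset.sum_add_distrib,
    Finset.sum_ite_eq', Finset.mem_univ, if_true]

theorem T0_left_eigenvector_general (k j : ℕ) (hj : j ≤ k) :
    Matrix.vecMul
        (fun r : Fin (k + 1) =>
          if j ≤ (r : ℕ) then (-1 : ℝ) ^ ((r : ℕ) - j) * (Nat.choose (k - j) ((r : ℕ) - j) : ℝ)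
          else 0)
        (T0 k) =
      ((j : ℝ) / k) •
        (fun r : Fin (k + 1) =>
          if j ≤ (r : ℕ) then (-1 : ℝ) ^ ((r : ℕ) - j) * (Nat.choose (k - j) ((r : ℕ) - j) : ℝ)
          else 0) := by
  change vecMul (fun r : Fin (k + 1) => signedChoose (k - j) j r) (T0 k) =
    _ • fun r : Fin (k + 1) => signedChoose (k - j) j r
  funext l
  induction l using Fin.cases with
  | zero =>
    rw [vecMul_T0_zero]
    rcases Nat.eq_zero_or_pos j with rfl | hj0
    · simp
    · simp [signedChoose, Nat.not_le.mpr hj0]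
  | succ i =>
    have hk : (k : ℝ) ≠ 0 := Nat.cast_ne_zero.mpr (Fin.pos i).ne'
    have := signedChoose_recurrence (k - j) j i
    rw [Nat.add_sub_cancel' hj] at this
    rw [vecMul_T0_succ, Pi.smul_apply, smul_eq_mul]
    simp only [Fin.val_castSucc, Fin.val_succ]
    field_simp
    linear_combination this

/-- The row vector `v^{(j)}` with `v^{(j)}(r) = (-1)^{r-j} C(k-j, r-j)` for `j ≤ r ≤ k`
and `0` for `r < j` is a left eigenvector of `T⁰` with eigenvalue `j/k`. -/
theorem T0_left_eigenvector (k j : ℕ) (hk : 1 ≤ k) (hj : j ≤ k) :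
    Matrix.vecMul
        (fun r : Fin (k + 1) =>
          if j ≤ (r : ℕ) then (-1 : ℝ) ^ ((r : ℕ) - j) * (Nat.choose (k - j) ((r : ℕ) - j) : ℝ)
          else 0)
        (T0 k) =
      ((j : ℝ) / k) •
        (fun r : Fin (k + 1) =>
          if j ≤ (r : ℕ) then (-1 : ℝ) ^ ((r : ℕ) - j) * (Nat.choose (k - j) ((r : ℕ) - j) : ℝ)
          else 0) :=
  T0_left_eigenvector_general k j hj
end

section
/- If S is an upper triangular (k+1)×(k+1) matrix and B is a tridiagonal (k+1)×(k+1) matrix (with possibly nonzero sub-, main-, and super-diagonal), then the (k,0) entry of the product (B S)^k equals (∏_{j=1}^{k} B_{j,j-1}) · (∏_{j=0}^{k-1} S_{j,j}). -/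
/-!
`B` vanishes below its first subdiagonal and `S` below its diagonal, so `M = B * S` is upper Hessenberg and
`M ^ k` vanishes below its `k`-th subdiagonal. The entry `(k, 0)` sits on that extreme
subdiagonal, where only one path of the matrix product survives: it is the product of the
subdiagonal entries `M (j + 1) j = B (j + 1) j * S j j`.
-/

namespace Matrix

variable {n : ℕ} {R : Type*}

/-- `p = 0`: upper triangular; `p = 1`: upper Hessenberg. -/
def HasLowerBandwidth [Zero R] (M : Matrix (Fin n) (Fin n) R) (p : ℕ) : Prop :=
  ∀ i j : Fin n, (j : ℕ) + p < i → M i j = 0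

section Semiring

variable [Semiring R] {A B M : Matrix (Fin n) (Fin n) R} {p q : ℕ}

theorem hasLowerBandwidth_one : HasLowerBandwidth (1 : Matrix (Fin n) (Fin n) R) 0 :=
  fun i j hij => one_apply_ne (α := R) (by rintro rfl; omega)

theorem HasLowerBandwidth.mul (hA : HasLowerBandwidth A p) (hB : HasLowerBandwidth B q) :
    HasLowerBandwidth (A * B) (p + q) := by
  intro i j hij
  rw [mul_apply]
  refine Finset.sum_eq_zero fun l _ => ?_
  by_cases hl : (l : ℕ) + p < i
  · rw [hA i l hl, zero_mul]
  · rw [hB l j (by omega), mul_zero]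

theorem HasLowerBandwidth.pow (hM : HasLowerBandwidth M p) (m : ℕ) :
    HasLowerBandwidth (M ^ m) (m * p) := by
  induction m with
  | zero => simpa using hasLowerBandwidth_one
  | succ m ih => simpa [pow_succ, add_mul] using ih.mul hM

theorem HasLowerBandwidth.mul_apply_of_eq_add (hA : HasLowerBandwidth A p)
    (hB : HasLowerBandwidth B q) {i l j : Fin n} (hil : (i : ℕ) = l + p)
    (hlj : (l : ℕ) = j + q) : (A * B) i j = A i l * B l j := by
  rw [mul_apply, Finset.sum_eq_single l]
  · intro l' _ hl'
    rcases lt_or_gt_of_ne (Fin.val_ne_of_ne hl') with h | h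
    · rw [hA i l' (by omega), zero_mul]
    · rw [hB l' j (by omega), mul_zero]
  · exact fun h => absurd (Finset.mem_univ l) h

end Semiring

theorem HasLowerBandwidth.pow_apply_of_chain [CommSemiring R] {M : Matrix (Fin n) (Fin n) R}
    {p : ℕ} (hM : HasLowerBandwidth M p) {m : ℕ} (v : Fin (m + 1) → Fin n)
    (hv : ∀ t : Fin m, (v t.succ : ℕ) = v t.castSucc + p) :
    (M ^ m) (v (Fin.last m)) (v 0) = ∏ t : Fin m, M (v t.succ) (v t.castSucc) := by
  have hval (t : Fin (m + 1)) : (v t : ℕ) = v 0 + t * p := by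
    induction t using Fin.induction with
    | zero => simp
    | succ t ih => rw [hv t, ih]; simp [add_mul, add_assoc]
  induction m with
  | zero => simp
  | succ m ih =>
    have hprev := ih (v ∘ Fin.castSucc) (fun t => hv t.castSucc)
      (fun t => by simpa using hval t.castSucc)
    simp only [Function.comp_apply, Fin.castSucc_zero] at hprev
    rw [pow_succ', hM.mul_apply_of_eq_add (hM.pow m) (i := v (Fin.last (m + 1)))
      (hv (Fin.last m)) (by simpa using hval (Fin.last m).castSucc), hprev,
      Fin.prod_univ_castSucc, mul_comm]
    rfl

end Matrix

open Matrix in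
theorem entry_k0_of_pow_general (k : ℕ) (R : Type*) [CommRing R]
    (B S : Matrix (Fin (k + 1)) (Fin (k + 1)) R)
    (hB : ∀ i j : Fin (k + 1), ((i : ℕ) + 1 < (j : ℕ) ∨ (j : ℕ) + 1 < (i : ℕ)) → B i j = 0)
    (hS : ∀ i j : Fin (k + 1), (j : ℕ) < (i : ℕ) → S i j = 0) :
    ((B * S) ^ k) (Fin.last k) 0 =
      (∏ j : Fin k, B j.succ j.castSucc) * (∏ j : Fin k, S j.castSucc j.castSucc) := by
  have hB' : HasLowerBandwidth B 1 := fun i j h => hB i j (Or.inr h)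
  have hS' : HasLowerBandwidth S 0 := hS
  have hBS : HasLowerBandwidth (B * S) 1 := hB'.mul hS'
  calc ((B * S) ^ k) (Fin.last k) 0 = ∏ t : Fin k, (B * S) t.succ t.castSucc :=
        hBS.pow_apply_of_chain id fun t => by simp
    _ = ∏ t : Fin k, B t.succ t.castSucc * S t.castSucc t.castSucc :=
        Finset.prod_congr rfl fun t _ => hB'.mul_apply_of_eq_add hS' (by simp) rfl
    _ = _ := Finset.prod_mul_distrib

/-- If `S` is upper triangular and `B` is tridiagonal ((k+1)×(k+1) over a commutative
ring), then the `(k,0)` entry of `(B S)^k` equals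
`(∏_{j=1}^{k} B_{j,j-1}) · (∏_{j=0}^{k-1} S_{j,j})`. -/
theorem entry_k0_of_pow (k : ℕ) (hk : 1 ≤ k) (R : Type*) [CommRing R]
    (B S : Matrix (Fin (k + 1)) (Fin (k + 1)) R)
    (hB : ∀ i j : Fin (k + 1), ((i : ℕ) + 1 < (j : ℕ) ∨ (j : ℕ) + 1 < (i : ℕ)) → B i j = 0)
    (hS : ∀ i j : Fin (k + 1), (j : ℕ) < (i : ℕ) → S i j = 0) :
    ((B * S) ^ k) (Fin.last k) 0 =
      (∏ j : Fin k, B j.succ j.castSucc) * (∏ j : Fin k, S j.castSucc j.castSucc) :=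
  entry_k0_of_pow_general k R B S hB hS
end

section
/- Let K : H_A → H_V be a linear map with K K* = I_V, let S be a unitary involution on H_A (S² = I), and set U = S(2K*K − I_A). If J = (K S K*) satisfies J g = cos θ · g for some unit vector g and cos θ ∈ (−1,1), then the vector ψ = (1/(√2 |sin θ|))(K* − e^{iθ} S K*) g satisfies U ψ = e^{iθ} ψ and ‖ψ‖ = ‖g‖ = 1. -/
open scoped InnerProductSpace

/-- Spectral mapping for Szegedy-type quantum walks: with `K K* = I`, `S` a self-adjoint
unitary involution, `U = S(2K*K − I)`, and `J = K S K*` satisfying `J g = cos θ · g` for a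
unit vector `g` with `θ ∈ (0,π)` (so `cos θ ∈ (−1,1)`), the vector
`ψ = (1/(√2 |sin θ|))(K* − e^{iθ} S K*) g` satisfies `U ψ = e^{iθ} ψ` and `‖ψ‖ = 1`. -/
theorem szegedy_spectral_mapping {HA HV : Type*}
    [NormedAddCommGroup HA] [InnerProductSpace ℂ HA] [FiniteDimensional ℂ HA]
    [NormedAddCommGroup HV] [InnerProductSpace ℂ HV] [FiniteDimensional ℂ HV]
    (K : HA →ₗ[ℂ] HV) (S : HA →ₗ[ℂ] HA)
    (hK : K ∘ₗ LinearMap.adjoint K = LinearMap.id)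
    (hS2 : S ∘ₗ S = LinearMap.id) (hSadj : LinearMap.adjoint S = S)
    (θ : ℝ) (hθ1 : 0 < θ) (hθ2 : θ < Real.pi) (hcos : Real.cos θ ∈ Set.Ioo (-1 : ℝ) 1)
    (g : HV) (hg : ‖g‖ = 1)
    (hJg : (K ∘ₗ S ∘ₗ LinearMap.adjoint K) g = ((Real.cos θ : ℂ)) • g) :
    (S ∘ₗ ((2 : ℂ) • (LinearMap.adjoint K ∘ₗ K) - LinearMap.id))
        (((1 : ℂ) / ((Real.sqrt 2 : ℂ) * ((|Real.sin θ| : ℝ) : ℂ))) •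
          (LinearMap.adjoint K g - Complex.exp (Complex.I * θ) • S (LinearMap.adjoint K g))) =
      Complex.exp (Complex.I * θ) •
        (((1 : ℂ) / ((Real.sqrt 2 : ℂ) * ((|Real.sin θ| : ℝ) : ℂ))) •
          (LinearMap.adjoint K g - Complex.exp (Complex.I * θ) • S (LinearMap.adjoint K g))) ∧
    ‖((1 : ℂ) / ((Real.sqrt 2 : ℂ) * ((|Real.sin θ| : ℝ) : ℂ))) •
        (LinearMap.adjoint K g - Complex.exp (Complex.I * θ) • S (LinearMap.adjoint K g))‖ = 1 := by
  have sinpos : 0 < Real.sin θ := Real.sin_pos_of_pos_of_lt_pi hθ1 hθ2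
  rw [abs_of_pos sinpos]
  set a := LinearMap.adjoint K g with ha
  set e := Complex.exp (Complex.I * θ) with he
  have hKa : K a = g := by
    have := LinearMap.ext_iff.mp hK g
    simpa using this
  have hKb : K (S a) = ((Real.cos θ : ℂ)) • g := by simpa using hJg
  have hSS : ∀ x : HA, S (S x) = x := fun x => by
    have := LinearMap.ext_iff.mp hS2 x
    simpa using this
  have heC : e = (Real.cos θ : ℂ) + (Real.sin θ : ℂ) * Complex.I := by
    rw [he, show Complex.I * θ = (θ:ℂ) * Complex.I by ring, Complex.exp_mul_I,
      ← Complex.ofReal_cos, ← Complex.ofReal_sin]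
  have h1 : (Real.sin θ : ℂ)^2 + (Real.cos θ : ℂ)^2 = 1 := by
    exact_mod_cast congrArg (Complex.ofReal) (Real.sin_sq_add_cos_sq θ)
  have hEq : e * e + 1 = 2 * (Real.cos θ : ℂ) * e := by
    rw [heC]
    linear_combination (-1 : ℂ) * h1 + (Real.sin θ : ℂ)^2 * Complex.I_sq
  have hEq' : e * e + 1 = 2 * Complex.cos (θ : ℂ) * e := by
    rw [← Complex.ofReal_cos]; exact hEq
  constructor
  · obtain ⟨c, hc⟩ : ∃ c : ℂ, c = (1 : ℂ) / ((Real.sqrt 2 : ℂ) * ((Real.sin θ : ℝ) : ℂ)) :=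
      ⟨_, rfl⟩
    rw [← hc]
    simp only [LinearMap.comp_apply, LinearMap.sub_apply, LinearMap.smul_apply,
      LinearMap.id_apply, map_smul, map_sub, hKa, hKb, hSS]
    match_scalars
    · linear_combination (norm := (push_cast; ring1)) c * hEq'
    · ring
  · -- norm part
    have hconj : (starRingEnd ℂ) e = (Real.cos θ : ℂ) - (Real.sin θ : ℂ) * Complex.I := by
      rw [heC, map_add, map_mul, Complex.conj_I, Complex.conj_ofReal, Complex.conj_ofReal]
      ring
    have haa : ⟪a, a⟫_ℂ = 1 := by
      rw [ha, LinearMap.adjoint_inner_left, hKa, inner_self_eq_norm_sq_to_K, hg]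
      norm_num
    have hab : ⟪a, S a⟫_ℂ = (Real.cos θ : ℂ) := by
      rw [ha, LinearMap.adjoint_inner_left, hKb, inner_smul_right,
        inner_self_eq_norm_sq_to_K, hg]
      norm_num
    have hba : ⟪S a, a⟫_ℂ = (Real.cos θ : ℂ) := by
      rw [← inner_conj_symm, hab, Complex.conj_ofReal]
    have hbb : ⟪S a, S a⟫_ℂ = 1 := by
      nth_rewrite 1 [← hSadj]
      rw [LinearMap.adjoint_inner_left, hSS, haa]
    have hvv : ⟪a - e • S a, a - e • S a⟫_ℂ = ((2 * Real.sin θ ^ 2 : ℝ) : ℂ) := by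
      simp only [inner_sub_left, inner_sub_right, inner_smul_left, inner_smul_right,
        haa, hab, hba, hbb, hconj]
      rw [heC, Complex.ofReal_mul, Complex.ofReal_pow, Complex.ofReal_ofNat]
      linear_combination (-1 : ℂ) * h1 + (-(Real.sin θ : ℂ)^2) * Complex.I_sq
    have hre : RCLike.re ((2 * Real.sin θ ^ 2 : ℝ) : ℂ) = 2 * Real.sin θ ^ 2 :=
      RCLike.ofReal_re _
    have hnv : ‖a - e • S a‖ = Real.sqrt 2 * Real.sin θ := by
      rw [norm_eq_sqrt_re_inner (𝕜 := ℂ), hvv, hre,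
        Real.sqrt_mul (by norm_num), Real.sqrt_sq sinpos.le]
    have h2 : ((1 : ℂ) / ((Real.sqrt 2 : ℂ) * ((Real.sin θ : ℝ) : ℂ)))
        = ((1 / (Real.sqrt 2 * Real.sin θ) : ℝ) : ℂ) := by push_cast; ring
    rw [norm_smul, hnv, h2, Complex.norm_real, Real.norm_eq_abs,
      abs_of_pos (by positivity), one_div, inv_mul_cancel₀ (by positivity)]
end
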